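/- The shifted Hankel determinant of weighted Motzkin numbers satisfies det(M_{i+j+1;ω})_{0≤i,j≤n−1} = Σ_{k=0}^{⌊n/2⌋} C(n−k,k)·(−1)^k·ω^{n−2k}. -/

import Mathlib

open scoped BigOperators

/-- Weighted count of Motzkin-type paths from (0,0) to (n,j): steps (1,1),(1,-1),(1,0),
horizontal steps weighted ω, staying weakly above the x-axis. -/
def motzkinM (ω : ℚ) : ℕ → ℤ → ℚ
  | 0, j => if j = 0 then 1 else 0
  | n+1, j => if j < 0 then 0 else
      motzkinM ω n (j-1) + ω * motzkinM ω n j + motzkinM ω n (j+1)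

/-!
Let `L = (motzkinM ω i k)` (paths ending at height `k`) and let `J` be the tridiagonal matrix
with `ω` on the diagonal and `1` next to it. The path recurrence says `J Lᵀ` is `Lᵀ` with its
columns shifted by one step, and since `J` is symmetric, steps can be moved from one factor of
`∑ₖ L(a,k) L(b,k)` to the other; hence `∑ₖ L(a,k) L(b,k) = M_{a+b;ω}`. Together this gives the
factorization `(M_{i+j+1;ω}) = L J Lᵀ`. As `L` is unitriangular, the Hankel determinant is
`det J`, which satisfies the three-term recurrence of the Chebyshev polynomials `S`, whose
coefficients are the signed binomials `(-1)ᵏ C(n-k, k)`.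
-/

open Finset Matrix Polynomial

theorem Nat.cast_choose_succ_mul_pow {R : Type*} [Semiring R] (x : R) (i j : ℕ) :
    (i.choose (j + 1) : R) * x ^ (i - j) = (i.choose (j + 1) : R) * x ^ (i - (j + 1)) * x := by
  rcases lt_or_ge i (j + 1) with h | h
  · simp [Nat.choose_eq_zero_of_lt h]
  · rw [mul_assoc, ← pow_succ, show i - (j + 1) + 1 = i - j by omega]

namespace Polynomial.Chebyshev

variable (R : Type*) [CommRing R]

theorem S_natCast_eq_sum_antidiagonal : ∀ n : ℕ,
    S R n = ∑ p ∈ antidiagonal n, (p.1.choose p.2 : R[X]) * (-1) ^ p.2 * X ^ (p.1 - p.2) := by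
  refine Nat.twoStepInduction (by simp) (by simp [Nat.sum_antidiagonal_succ]) fun n ih ih1 ↦ ?_
  have pascal : ∀ p ∈ antidiagonal n,
      ((p.1 + 1).choose (p.2 + 1) : R[X]) * (-1) ^ (p.2 + 1) * X ^ (p.1 + 1 - (p.2 + 1)) =
        X * ((p.1.choose (p.2 + 1) : R[X]) * (-1) ^ (p.2 + 1) * X ^ (p.1 - (p.2 + 1))) -
          (p.1.choose p.2 : R[X]) * (-1) ^ p.2 * X ^ (p.1 - p.2) := by
    intro p _
    rw [Nat.add_sub_add_right, Nat.choose_succ_succ', Nat.cast_add]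
    linear_combination (-1 : R[X]) ^ (p.2 + 1) * Nat.cast_choose_succ_mul_pow (X : R[X]) p.1 p.2
  push_cast at ih1 ⊢
  rw [S_add_two, ih, ih1, Nat.antidiagonal_succ_succ', Nat.antidiagonal_succ']
  simp only [sum_cons, sum_map, Function.Embedding.coe_prodMap, Function.Embedding.coeFn_mk,
    Function.Embedding.refl_apply, Prod.map_fst, Prod.map_snd, Nat.succ_eq_add_one]
  rw [sum_congr rfl pascal, sum_sub_distrib, mul_add, mul_sum]
  simp only [Nat.choose_zero_right, Nat.choose_zero_succ, Nat.cast_one, Nat.cast_zero, pow_zero,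
    tsub_zero, zero_tsub, one_mul, mul_one, zero_mul, zero_add]
  ring

theorem S_natCast_eq_sum_range (n : ℕ) :
    S R n = ∑ k ∈ range (n / 2 + 1), ((n - k).choose k : R[X]) * (-1) ^ k * X ^ (n - 2 * k) := by
  rw [S_natCast_eq_sum_antidiagonal, ← Nat.sum_antidiagonal_swap]
  simp only [Prod.fst_swap, Prod.snd_swap]
  rw [Nat.sum_antidiagonal_eq_sum_range_succ
    (fun k m ↦ (m.choose k : R[X]) * (-1) ^ k * X ^ (m - k))]
  refine (sum_subset_zero_on_sdiff (range_subset_range.2 (by omega)) (fun k hk ↦ ?_)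
    (fun k _ ↦ by rw [Nat.sub_sub, two_mul])).symm
  rw [mem_sdiff, mem_range, mem_range] at hk
  rw [Nat.choose_eq_zero_of_lt (by omega), Nat.cast_zero, zero_mul, zero_mul]

end Polynomial.Chebyshev

section Tridiagonal

variable {R : Type*}

def tridiag [Semiring R] (ω : R) (k l : ℕ) : R :=
  (if l + 1 = k then (1 : R) else 0) + (if l = k then ω else 0) + (if l = k + 1 then 1 else 0)

theorem tridiag_comm [Semiring R] (ω : R) (k l : ℕ) : tridiag ω k l = tridiag ω l k := by
  simp only [tridiag, @eq_comm _ l k, @eq_comm _ (l + 1) k, @eq_comm _ l (k + 1)]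
  abel

@[simp] theorem tridiag_succ_succ [Semiring R] (ω : R) (k l : ℕ) :
    tridiag ω (k + 1) (l + 1) = tridiag ω k l := by
  simp [tridiag]

def tridiagMatrix [Semiring R] (ω : R) (n : ℕ) : Matrix (Fin n) (Fin n) R :=
  of fun k l ↦ tridiag ω k l

theorem submatrix_succ_tridiagMatrix [Semiring R] (ω : R) (n : ℕ) :
    (tridiagMatrix ω (n + 1)).submatrix Fin.succ Fin.succ = tridiagMatrix ω n := by
  ext; simp [tridiagMatrix]

theorem det_tridiagMatrix_add_two [CommRing R] (ω : R) (n : ℕ) :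
    (tridiagMatrix ω (n + 2)).det =
      ω * (tridiagMatrix ω (n + 1)).det - (tridiagMatrix ω n).det := by
  set A := tridiagMatrix ω (n + 2)
  have minor₀ : (A.submatrix Fin.succ (Fin.succAbove 0)).det = (tridiagMatrix ω (n + 1)).det := by
    rw [Fin.succAbove_zero, submatrix_succ_tridiagMatrix]
  have minor₁ : (A.submatrix Fin.succ (Fin.succAbove 1)).det = (tridiagMatrix ω n).det := by
    have h : (A.submatrix Fin.succ (Fin.succAbove 1)).submatrix (Fin.succAbove 0) Fin.succ =
        tridiagMatrix ω n := by
      ext; simp [A, tridiagMatrix]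
    rw [det_succ_column_zero, Fin.sum_univ_succ, h]
    simp [A, tridiagMatrix, tridiag]
  rw [det_succ_row_zero, Fin.sum_univ_succ, Fin.sum_univ_succ, minor₀, Fin.succ_zero_eq_one,
    minor₁]
  simp [A, tridiagMatrix, tridiag, sub_eq_add_neg]

theorem det_tridiagMatrix [CommRing R] (ω : R) :
    ∀ n : ℕ, (tridiagMatrix ω n).det = (Chebyshev.S R n).eval ω :=
  Nat.twoStepInduction (by simp) (by simp [tridiagMatrix, tridiag]) fun n ih ih1 ↦ by
    rw [det_tridiagMatrix_add_two, ih, ih1]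
    push_cast
    simp [Chebyshev.S_add_two]

end Tridiagonal

section Motzkin

variable (ω : ℚ)

theorem motzkinM_of_neg {n : ℕ} {j : ℤ} (h : j < 0) : motzkinM ω n j = 0 := by
  cases n <;> simp [motzkinM, h, h.ne]

theorem motzkinM_succ (n : ℕ) {j : ℤ} (h : 0 ≤ j) :
    motzkinM ω (n + 1) j =
      motzkinM ω n (j - 1) + ω * motzkinM ω n j + motzkinM ω n (j + 1) := by
  simp [motzkinM, h]

theorem motzkinM_of_lt : ∀ {n : ℕ} {j : ℤ}, n < j → motzkinM ω n j = 0
  | 0, _, h => if_neg (by omega)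
  | n + 1, _, h => by
    rw [motzkinM_succ ω n (by omega), motzkinM_of_lt (by omega), motzkinM_of_lt (by omega),
      motzkinM_of_lt (by omega)]
    ring

theorem motzkinM_self : ∀ n : ℕ, motzkinM ω n n = 1
  | 0 => rfl
  | n + 1 => by
    rw [Nat.cast_succ, motzkinM_succ ω n (by omega), add_sub_cancel_right, motzkinM_self n,
      motzkinM_of_lt ω (by omega), motzkinM_of_lt ω (by omega)]
    ring

theorem sum_range_tridiag_mul_motzkinM {N j k : ℕ} (hj : j < N) (hk : k < N) :
    ∑ l ∈ range N, tridiag ω k l * motzkinM ω j l = motzkinM ω (j + 1) k := by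
  have lower : (∑ l ∈ range N, if l + 1 = k then motzkinM ω j l else 0) =
      motzkinM ω j (k - 1) := by
    cases k with
    | zero => simp [motzkinM_of_neg]
    | succ k => simp [show k < N by omega]
  have upper : (if k + 1 < N then motzkinM ω j ↑(k + 1) else 0) = motzkinM ω j (k + 1) := by
    split_ifs with h
    · push_cast; rfl
    · rw [motzkinM_of_lt ω (by omega)]
  rw [motzkinM_succ ω j (Int.natCast_nonneg k), ← lower, ← upper]
  simp only [tridiag, add_mul, sum_add_distrib, ite_mul, one_mul, zero_mul, sum_ite_eq',
    mem_range, hk, if_true]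

theorem sum_motzkinM_succ_mul_motzkinM {N a b : ℕ} (ha : a < N) (hb : b < N) :
    ∑ k ∈ range N, motzkinM ω (a + 1) k * motzkinM ω b k =
      ∑ k ∈ range N, motzkinM ω a k * motzkinM ω (b + 1) k :=
  calc _ = ∑ k ∈ range N, (∑ l ∈ range N, tridiag ω k l * motzkinM ω a l) * motzkinM ω b k :=
        sum_congr rfl fun k hk ↦ by rw [sum_range_tridiag_mul_motzkinM ω ha (mem_range.1 hk)]
    _ = ∑ l ∈ range N, motzkinM ω a l * ∑ k ∈ range N, tridiag ω l k * motzkinM ω b k := by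
        simp only [sum_mul, mul_sum]
        rw [sum_comm]
        refine sum_congr rfl fun _ _ ↦ sum_congr rfl fun _ _ ↦ ?_
        rw [tridiag_comm]
        ring
    _ = _ := sum_congr rfl fun l hl ↦ by rw [sum_range_tridiag_mul_motzkinM ω hb (mem_range.1 hl)]

theorem sum_range_motzkinM_mul {N a : ℕ} (ha : a < N) (f : ℕ → ℚ) :
    ∑ k ∈ range N, motzkinM ω a k * f k = ∑ k ∈ range (a + 1), motzkinM ω a k * f k := by
  refine (sum_subset (range_subset_range.2 ha) fun k _ hk ↦ ?_).symm
  rw [motzkinM_of_lt ω (by simp at hk; omega), zero_mul]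

theorem sum_motzkinM_mul_motzkinM {a N : ℕ} (b : ℕ) (ha : a < N) :
    ∑ k ∈ range N, motzkinM ω a k * motzkinM ω b k = motzkinM ω (a + b) 0 := by
  induction b generalizing a N with
  | zero => simp [motzkinM, show 0 < N by omega]
  | succ b ih =>
    rw [sum_range_motzkinM_mul ω ha, ← sum_range_motzkinM_mul ω (N := a + b + 2) (by omega),
      ← sum_motzkinM_succ_mul_motzkinM ω (by omega) (by omega), ih (by omega), add_right_comm,
      add_assoc]

def motzkinMatrix (n : ℕ) : Matrix (Fin n) (Fin n) ℚ :=
  of fun i k ↦ motzkinM ω i k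

theorem det_motzkinMatrix (n : ℕ) : (motzkinMatrix ω n).det = 1 := by
  rw [det_of_isLowerTriangular (motzkinMatrix ω n)
    fun i k (h : i < k) ↦ motzkinM_of_lt ω (by exact_mod_cast h)]
  exact prod_eq_one fun i _ ↦ motzkinM_self ω i

theorem hankel_eq_motzkinMatrix_mul_tridiagMatrix_mul_transpose (n : ℕ) :
    (of fun i j : Fin n ↦ motzkinM ω (i + j + 1) 0) =
      motzkinMatrix ω n * tridiagMatrix ω n * (motzkinMatrix ω n)ᵀ := by
  ext i j
  have row (k : Fin n) : ∑ l : Fin n, tridiag ω k l * motzkinM ω j l = motzkinM ω (j + 1) k := by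
    rw [Fin.sum_univ_eq_sum_range (fun l ↦ tridiag ω k l * motzkinM ω j l)]
    exact sum_range_tridiag_mul_motzkinM ω j.isLt k.isLt
  rw [Matrix.mul_assoc]
  simp only [mul_apply, motzkinMatrix, tridiagMatrix, of_apply, transpose_apply, row]
  rw [Fin.sum_univ_eq_sum_range (fun k ↦ motzkinM ω i k * motzkinM ω (j + 1) k),
    sum_motzkinM_mul_motzkinM ω _ i.isLt, add_assoc]

end Motzkin

theorem motzkin_hankel2_det (ω : ℚ) (n : ℕ) :
    Matrix.det (Matrix.of fun i j : Fin n => motzkinM ω (i.val + j.val + 1) 0) =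
      ∑ k ∈ Finset.range (n/2 + 1),
        ((n-k).choose k : ℚ) * (-1) ^ k * ω ^ (n - 2*k) := by
  rw [hankel_eq_motzkinMatrix_mul_tridiagMatrix_mul_transpose, det_mul, det_mul, det_transpose,
    det_motzkinMatrix, det_tridiagMatrix, Chebyshev.S_natCast_eq_sum_range]
  simp [eval_finsetSum]
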